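/- arXiv:1508.01844 — 8 statements merged into one kernel-verified Lean document; each statement's English description precedes it below -/
import Mathlib

section
/- Let U be a metric space, s : U → E continuous into a topological space E with a continuous map 0 : U → E, let F' ⊆ F be subsets of a topological space X, and ψ : s⁻¹(0) → F a homeomorphism onto F (where s⁻¹(0) = {x : s(x) = 0(x)} carries the subspace topology), with F' open in F. Define U' := {x ∈ V : d(x, ψ⁻¹(F')) < d(x, ψ⁻¹(F \ F'))} where V ⊆ U is any open set with V ∩ s⁻¹(0) = ψ⁻¹(F'). Then U' is open, U' ∩ s⁻¹(0) = ψ⁻¹(F'), and the closure of U' intersects s⁻¹(0) in a subset of the closure of ψ⁻¹(F') in s⁻¹(0). -/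
/-!
Let `A = Z ∩ ψ⁻¹ F'` and `B = Z ∩ ψ⁻¹ (F \ F')`. Since `F'` is open in `F` and `ψ` is continuous on
`Z`, the set `A` is cut out of `Z` by an open set missing `B`, so `A` does not meet `closure B`;
hence points of `A` are strictly closer to `A` than to `B`, which gives `U' ∩ Z = A`. On the
closure of `U'` the continuous inequality `d(·, A) < d(·, B)` becomes `d(·, A) ≤ d(·, B)`, so at a
point of `B`, where `d(·, B) = 0`, also `d(·, A) = 0`.
-/

open Set Metric

theorem ContinuousOn.disjoint_inter_preimage_closure_diff_preimage
    {α β : Type*} [TopologicalSpace α] [TopologicalSpace β] {f : α → β} {s : Set α} {t : Set β}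
    (hf : ContinuousOn f s) (ht : IsOpen t) :
    Disjoint (s ∩ f ⁻¹' t) (closure (s \ f ⁻¹' t)) := by
  obtain ⟨u, hu, hut⟩ := continuousOn_iff'.mp hf t ht
  have hsub : s ∩ f ⁻¹' t ⊆ u := fun x hx => ((hut ▸ ⟨hx.2, hx.1⟩ : x ∈ u ∩ s)).1
  have hdisj : Disjoint u (s \ f ⁻¹' t) :=
    disjoint_left.mpr fun x hxu hx => hx.2 (hut.symm ▸ ⟨hxu, hx.1⟩ : x ∈ f ⁻¹' t ∩ s).1
  exact (hdisj.closure_right hu).mono_left hsub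

def closerTo {α : Type*} [PseudoEMetricSpace α] (A B : Set α) : Set α :=
  {x | infEDist x A < infEDist x B}

section closerTo

variable {α : Type*} [PseudoEMetricSpace α] {A B : Set α}

theorem isOpen_closerTo : IsOpen (closerTo A B) :=
  isOpen_lt continuous_infEDist continuous_infEDist

theorem subset_closerTo (h : Disjoint A (closure B)) : A ⊆ closerTo A B := fun x hx => by
  have hxB : infEDist x B ≠ 0 := fun h0 =>
    disjoint_left.mp h hx (mem_closure_iff_infEDist_zero.mpr h0)
  simpa [closerTo, infEDist_zero_of_mem hx, pos_iff_ne_zero] using hxB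

theorem closure_closerTo_inter_closure_subset :
    closure (closerTo A B) ∩ closure B ⊆ closure A := by
  rintro x ⟨hxC, hxB⟩
  have hle : infEDist x A ≤ infEDist x B :=
    closure_lt_subset_le continuous_infEDist continuous_infEDist hxC
  rw [mem_closure_iff_infEDist_zero] at hxB ⊢
  exact nonpos_iff_eq_zero.mp (hxB ▸ hle)

end closerTo

theorem restriction_of_chart_domain_general
    {U X : Type*} [MetricSpace U] [TopologicalSpace X]
    (ψ : U → X) (F F' : Set X)
    (Z : Set U)
    (hemb : Topology.IsEmbedding (fun x : Z => ψ x))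
    (himg : ψ '' Z = F)
    (hopen : ∃ O : Set X, IsOpen O ∧ F' = O ∩ F)
    (V : Set U) (hV : IsOpen V) (hVZ : V ∩ Z = Z ∩ ψ ⁻¹' F')
    (U' : Set U)
    (hU' : U' = {x ∈ V |
      EMetric.infEdist x (Z ∩ ψ ⁻¹' F') < EMetric.infEdist x (Z ∩ ψ ⁻¹' (F \ F'))}) :
    IsOpen U' ∧ U' ∩ Z = Z ∩ ψ ⁻¹' F' ∧
      closure U' ∩ Z ⊆ closure (Z ∩ ψ ⁻¹' F') := by
  obtain ⟨O, hO, rfl⟩ := hopen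
  set A := Z ∩ ψ ⁻¹' (O ∩ F)
  set B := Z ∩ ψ ⁻¹' (F \ (O ∩ F))
  have hψZ : MapsTo ψ Z F := fun x hx => himg ▸ mem_image_of_mem ψ hx
  have hψ : ContinuousOn ψ Z := continuousOn_iff_continuous_domRestrict.mpr hemb.continuous
  have hA : A ⊆ Z ∩ ψ ⁻¹' O := fun x hx => ⟨hx.1, hx.2.1⟩
  have hB : B ⊆ Z \ ψ ⁻¹' O := fun x hx => ⟨hx.1, fun hxO => hx.2.2 ⟨hxO, hx.2.1⟩⟩
  have hAB : Disjoint A (closure B) :=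
    (hψ.disjoint_inter_preimage_closure_diff_preimage hO).mono hA (closure_mono hB)
  -- `EMetric.infEdist` is a deprecated alias of `Metric.infEDist`, so this holds by unfolding.
  have hU'eq : U' = V ∩ closerTo A B := hU'
  have hU'C : U' ⊆ closerTo A B := hU'eq ▸ inter_subset_right
  refine ⟨hU'eq ▸ hV.inter isOpen_closerTo, ?_, ?_⟩
  · rw [hU'eq, inter_right_comm, hVZ]
    exact inter_eq_left.mpr (subset_closerTo hAB)
  · rintro x ⟨hxU', hxZ⟩
    by_cases hxF' : ψ x ∈ O ∩ F
    · exact subset_closure ⟨hxZ, hxF'⟩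
    · exact closure_closerTo_inter_closure_subset
        ⟨closure_mono hU'C hxU', subset_closure (⟨hxZ, hψZ hxZ, hxF'⟩ : x ∈ B)⟩

theorem restriction_of_chart_domain
    {U E X : Type*} [MetricSpace U] [TopologicalSpace E] [TopologicalSpace X]
    (s z : U → E) (hs : Continuous s) (hz : Continuous z)
    (ψ : U → X) (F F' : Set X) (hF'F : F' ⊆ F)
    (Z : Set U) (hZdef : Z = {x | s x = z x})
    (hemb : Topology.IsEmbedding (fun x : Z => ψ x))
    (himg : ψ '' Z = F)
    (hopen : ∃ O : Set X, IsOpen O ∧ F' = O ∩ F)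
    (V : Set U) (hV : IsOpen V) (hVZ : V ∩ Z = Z ∩ ψ ⁻¹' F')
    (U' : Set U)
    (hU' : U' = {x ∈ V |
      EMetric.infEdist x (Z ∩ ψ ⁻¹' F') < EMetric.infEdist x (Z ∩ ψ ⁻¹' (F \ F'))}) :
    IsOpen U' ∧ U' ∩ Z = Z ∩ ψ ⁻¹' F' ∧
      closure U' ∩ Z ⊆ closure (Z ∩ ψ ⁻¹' F') :=
  restriction_of_chart_domain_general ψ F F' Z hemb himg hopen V hV hVZ U' hU'
end

section
/- Let O be a separable, locally compact metric space, and let R ⊆ O × O be an equivalence relation that is closed as a subset of O × O. Then the quotient space O/R with the quotient topology is Hausdorff. -/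
open TopologicalSpace Set

namespace QBCR

variable {O : Type*} [TopologicalSpace O]

/-- Saturation of a set under a setoid. -/
def sat (s : Setoid O) (S : Set O) : Set O := {y | ∃ x ∈ S, s.r x y}

omit [TopologicalSpace O] in
lemma subset_sat (s : Setoid O) (S : Set O) : S ⊆ sat s S :=
  fun x hx => ⟨x, hx, s.iseqv.refl x⟩

lemma sat_inter_isCompact [T2Space O] {s : Setoid O}
    (hclosed : IsClosed {p : O × O | s.r p.1 p.2}) {S K : Set O}
    (hS : IsCompact S) (hK : IsCompact K) : IsCompact (sat s S ∩ K) := by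
  have : sat s S ∩ K = Prod.snd '' ({p : O × O | s.r p.1 p.2} ∩ S ×ˢ K) := by
    ext y
    constructor
    · rintro ⟨⟨x, hxS, hr⟩, hyK⟩
      exact ⟨(x, y), ⟨hr, hxS, hyK⟩, rfl⟩
    · rintro ⟨⟨x, y'⟩, ⟨hr, hxS, hyK⟩, rfl⟩
      exact ⟨⟨x, hxS, hr⟩, hyK⟩
  rw [this]
  exact (((hS.prod hK).inter_left hclosed)).image continuous_snd

/-- Separation of two compact sets with no related pair, by compact sets
containing them in their interior and still with no related pair. -/
lemma compact_sep [LocallyCompactSpace O] {s : Setoid O}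
    (hclosed : IsClosed {p : O × O | s.r p.1 p.2}) {K L : Set O}
    (hK : IsCompact K) (hL : IsCompact L)
    (h : ∀ x ∈ K, ∀ y ∈ L, ¬ s.r x y) :
    ∃ S T : Set O, IsCompact S ∧ IsCompact T ∧ K ⊆ interior S ∧ L ⊆ interior T ∧
      ∀ x ∈ S, ∀ y ∈ T, ¬ s.r x y := by
  have hsub : K ×ˢ L ⊆ {p : O × O | s.r p.1 p.2}ᶜ := by
    rintro ⟨x, y⟩ ⟨hx, hy⟩ hr
    exact h x hx y hy hr
  obtain ⟨u, v, hu, hv, hKu, hLv, huv⟩ :=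
    generalized_tube_lemma hK hL hclosed.isOpen_compl hsub
  obtain ⟨S, hSc, hKS, hSu⟩ := exists_compact_between hK hu hKu
  obtain ⟨T, hTc, hLT, hTv⟩ := exists_compact_between hL hv hLv
  refine ⟨S, T, hSc, hTc, hKS, hLT, fun x hx y hy hr => ?_⟩
  exact huv (Set.mk_mem_prod (hSu hx) (hTv hy)) hr

end QBCR

open QBCR

theorem quotient_by_closed_relation_t2
    {O : Type*} [MetricSpace O] [TopologicalSpace.SeparableSpace O]
    [LocallyCompactSpace O] (s : Setoid O)
    (hclosed : IsClosed {p : O × O | s.r p.1 p.2}) :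
    T2Space (Quotient s) := by
  have : SecondCountableTopology O := UniformSpace.secondCountable_of_separable O
  have hsig : SigmaCompactSpace O := inferInstance
  constructor
  intro p q hpq
  induction p using Quotient.ind with | _ a => ?_
  induction q using Quotient.ind with | _ b => ?_
  have hab : ¬ s.r a b := fun h => hpq (Quotient.sound h)
  -- the two classes
  set A : Set O := {x | s.r a x} with hA
  set B : Set O := {x | s.r b x} with hB
  have hAc : IsClosed A := hclosed.preimage (continuous_const.prodMk continuous_id)
  have hBc : IsClosed B := hclosed.preimage (continuous_const.prodMk continuous_id)
  -- compact exhaustion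
  let K : CompactExhaustion O := CompactExhaustion.choice O
  -- invariant
  set P : Set O → Set O → Prop := fun S T =>
    IsCompact S ∧ IsCompact T ∧ (∀ x ∈ S, ∀ y ∈ T, ¬ s.r x y) ∧
      (∀ x ∈ S, ¬ s.r b x) ∧ (∀ y ∈ T, ¬ s.r a y) with hP
  have step : ∀ (n : ℕ) (S T : Set O), P S T →
      ∃ S₁ T₁ : Set O, P S₁ T₁ ∧
        S ∪ ((sat s S ∪ A) ∩ K n) ⊆ interior S₁ ∧
        T ∪ ((sat s T ∪ B) ∩ K n) ⊆ interior T₁ := by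
    rintro n S T ⟨hSc, hTc, h1, h2, h3⟩
    have hs1 : ∀ x ∈ sat s S ∪ A, ∀ y ∈ sat s T ∪ B, ¬ s.r x y := by
      rintro x (⟨x0, hx0, hx0x⟩ | hxA) y (⟨y0, hy0, hy0y⟩ | hyB) hr
      · exact h1 x0 hx0 y0 hy0
          (s.iseqv.trans hx0x (s.iseqv.trans hr (s.iseqv.symm hy0y)))
      · exact h2 x0 hx0 (s.iseqv.trans hyB (s.iseqv.trans (s.iseqv.symm hr) (s.iseqv.symm hx0x)))
      · exact h3 y0 hy0 (s.iseqv.trans hxA (s.iseqv.trans hr (s.iseqv.symm hy0y)))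
      · exact hab (s.iseqv.trans hxA (s.iseqv.trans hr (s.iseqv.symm hyB)))
    have hs2 : ∀ x ∈ sat s S ∪ A, ¬ s.r b x := by
      rintro x (⟨x0, hx0, hx0x⟩ | hxA) hr
      · exact h2 x0 hx0 (s.iseqv.trans hr (s.iseqv.symm hx0x))
      · exact hab (s.iseqv.trans hxA (s.iseqv.symm hr))
    have hs3 : ∀ y ∈ sat s T ∪ B, ¬ s.r a y := by
      rintro y (⟨y0, hy0, hy0y⟩ | hyB) hr
      · exact h3 y0 hy0 (s.iseqv.trans hr (s.iseqv.symm hy0y))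
      · exact hab (s.iseqv.trans hr (s.iseqv.symm hyB))
    set S' : Set O := S ∪ ((sat s S ∪ A) ∩ K n) with hS'
    set T' : Set O := T ∪ ((sat s T ∪ B) ∩ K n) with hT'
    have hS'sub : S' ⊆ sat s S ∪ A :=
      union_subset ((subset_sat s S).trans subset_union_left) inter_subset_left
    have hT'sub : T' ⊆ sat s T ∪ B :=
      union_subset ((subset_sat s T).trans subset_union_left) inter_subset_left
    have hS'c : IsCompact S' := by
      rw [hS', union_inter_distrib_right]
      exact hSc.union ((sat_inter_isCompact hclosed hSc (K.isCompact n)).union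
        ((K.isCompact n).inter_left hAc))
    have hT'c : IsCompact T' := by
      rw [hT', union_inter_distrib_right]
      exact hTc.union ((sat_inter_isCompact hclosed hTc (K.isCompact n)).union
        ((K.isCompact n).inter_left hBc))
    obtain ⟨Sc, Tc, hScc, hTcc, hS'Sc, hT'Tc, hnorel⟩ :=
      compact_sep hclosed hS'c hT'c
        (fun x hx y hy => hs1 x (hS'sub hx) y (hT'sub hy))
    obtain ⟨M, hMc, hS'M, hMB⟩ := exists_compact_between hS'c hBc.isOpen_compl
      (fun x hx hxB => hs2 x (hS'sub hx) hxB)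
    obtain ⟨N, hNc, hT'N, hNA⟩ := exists_compact_between hT'c hAc.isOpen_compl
      (fun y hy hyA => hs3 y (hT'sub hy) hyA)
    refine ⟨Sc ∩ M, Tc ∩ N, ⟨hScc.inter hMc, hTcc.inter hNc,
      fun x hx y hy => hnorel x hx.1 y hy.1,
      fun x hx => hMB hx.2, fun y hy => hNA hy.2⟩, ?_, ?_⟩
    · rw [interior_inter]; exact subset_inter hS'Sc hS'M
    · rw [interior_inter]; exact subset_inter hT'Tc hT'N
  have h0 : P ∅ ∅ := ⟨isCompact_empty, isCompact_empty, by simp, by simp, by simp⟩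
  choose F G hFG hFsub hGsub using step
  -- the recursive sequence
  let f : ℕ → {p : Set O × Set O // P p.1 p.2} := fun n =>
    Nat.rec ⟨(∅, ∅), h0⟩
      (fun n prev => ⟨(F n prev.1.1 prev.1.2 prev.2, G n prev.1.1 prev.1.2 prev.2),
        hFG n prev.1.1 prev.1.2 prev.2⟩) n
  have hfP : ∀ n, P (f n).1.1 (f n).1.2 := fun n => (f n).2
  have hfS : ∀ n, (f n).1.1 ∪ ((sat s (f n).1.1 ∪ A) ∩ K n) ⊆ interior (f (n+1)).1.1 :=
    fun n => hFsub n (f n).1.1 (f n).1.2 (f n).2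
  have hfT : ∀ n, (f n).1.2 ∪ ((sat s (f n).1.2 ∪ B) ∩ K n) ⊆ interior (f (n+1)).1.2 :=
    fun n => hGsub n (f n).1.1 (f n).1.2 (f n).2
  have hmonoS : ∀ {m n : ℕ}, m ≤ n → (f m).1.1 ⊆ (f n).1.1 := by
    intro m n h
    induction n with
    | zero => exact Nat.le_zero.mp h ▸ subset_rfl
    | succ k ih =>
      rcases Nat.lt_or_ge m (k+1) with h' | h'
      · exact (ih (Nat.lt_succ_iff.mp h')).trans
          ((subset_union_left.trans (hfS k)).trans interior_subset)
      · exact Nat.le_antisymm h h' ▸ subset_rfl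
  have hmonoT : ∀ {m n : ℕ}, m ≤ n → (f m).1.2 ⊆ (f n).1.2 := by
    intro m n h
    induction n with
    | zero => exact Nat.le_zero.mp h ▸ subset_rfl
    | succ k ih =>
      rcases Nat.lt_or_ge m (k+1) with h' | h'
      · exact (ih (Nat.lt_succ_iff.mp h')).trans
          ((subset_union_left.trans (hfT k)).trans interior_subset)
      · exact Nat.le_antisymm h h' ▸ subset_rfl
  set U : Set O := ⋃ n, interior (f n).1.1 with hU
  set V : Set O := ⋃ n, interior (f n).1.2 with hV
  have hUopen : IsOpen U := isOpen_iUnion fun n => isOpen_interior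
  have hVopen : IsOpen V := isOpen_iUnion fun n => isOpen_interior
  have haU : a ∈ U := by
    obtain ⟨n, hn⟩ := K.exists_mem a
    exact mem_iUnion.mpr ⟨n+1, hfS n (Or.inr ⟨Or.inr (s.iseqv.refl a), hn⟩)⟩
  have hbV : b ∈ V := by
    obtain ⟨n, hn⟩ := K.exists_mem b
    exact mem_iUnion.mpr ⟨n+1, hfT n (Or.inr ⟨Or.inr (s.iseqv.refl b), hn⟩)⟩
  have hUsat : ∀ x ∈ U, ∀ y, s.r x y → y ∈ U := by
    intro x hx y hr
    obtain ⟨n, hn⟩ := mem_iUnion.mp hx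
    obtain ⟨m, hm⟩ := K.exists_mem y
    refine mem_iUnion.mpr ⟨max n m + 1, hfS (max n m) (Or.inr ⟨Or.inl ⟨x, ?_, hr⟩, K.subset (le_max_right n m) hm⟩)⟩
    exact hmonoS (le_max_left n m) (interior_subset hn)
  have hVsat : ∀ x ∈ V, ∀ y, s.r x y → y ∈ V := by
    intro x hx y hr
    obtain ⟨n, hn⟩ := mem_iUnion.mp hx
    obtain ⟨m, hm⟩ := K.exists_mem y
    refine mem_iUnion.mpr ⟨max n m + 1, hfT (max n m) (Or.inr ⟨Or.inl ⟨x, ?_, hr⟩, K.subset (le_max_right n m) hm⟩)⟩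
    exact hmonoT (le_max_left n m) (interior_subset hn)
  have hUV : ∀ x, x ∈ U → x ∈ V → False := by
    intro x hxU hxV
    obtain ⟨n, hn⟩ := mem_iUnion.mp hxU
    obtain ⟨m, hm⟩ := mem_iUnion.mp hxV
    exact (hfP (max n m)).2.2.1 x (hmonoS (le_max_left n m) (interior_subset hn))
      x (hmonoT (le_max_right n m) (interior_subset hm)) (s.iseqv.refl x)
  -- descend to the quotient
  refine ⟨Quotient.mk s '' U, Quotient.mk s '' V, ?_, ?_, ⟨a, haU, rfl⟩, ⟨b, hbV, rfl⟩, ?_⟩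
  · rw [← isQuotientMap_quotient_mk'.isOpen_preimage]
    have : Quotient.mk' ⁻¹' (Quotient.mk s '' U) = U := by
      ext x
      constructor
      · rintro ⟨u, huU, hu⟩
        exact hUsat u huU x (Quotient.exact hu)
      · intro hx; exact ⟨x, hx, rfl⟩
    rw [this]; exact hUopen
  · rw [← isQuotientMap_quotient_mk'.isOpen_preimage]
    have : Quotient.mk' ⁻¹' (Quotient.mk s '' V) = V := by
      ext x
      constructor
      · rintro ⟨u, huV, hu⟩
        exact hVsat u huV x (Quotient.exact hu)
      · intro hx; exact ⟨x, hx, rfl⟩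
    rw [this]; exact hVopen
  · rw [Set.disjoint_left]
    rintro z ⟨u, huU, rfl⟩ ⟨v, hvV, hv⟩
    exact hUV v (hUsat u huU v (Quotient.exact hv.symm)) hvV
end

section
/- Let Y be a Hausdorff topological space and B, C ⊆ Y compact subsets such that both B and C are second countable in their subspace topologies. Then B ∪ C is second countable in its subspace topology. -/
/-!
`B ⊕ C` is compact and second countable and maps onto `B ∪ C` by a continuous surjection, which
is proper because the target is Hausdorff. Proper surjections preserve second countability: for
finite families `t` of basic open sets the sets `(f '' (⋃₀ t)ᶜ)ᶜ` are open since `f` is closed,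
and they form a basis since every fibre, being compact, is covered by finitely many basic open
sets inside any given open neighbourhood of it.
-/

open Set TopologicalSpace

theorem TopologicalSpace.IsTopologicalBasis.exists_finite_of_isCompact_subset_isOpen
    {X : Type*} [TopologicalSpace X] {b : Set (Set X)} (hb : IsTopologicalBasis b)
    {K U : Set X} (hK : IsCompact K) (hU : IsOpen U) (hKU : K ⊆ U) :
    ∃ t ⊆ b, t.Finite ∧ K ⊆ ⋃₀ t ∧ ⋃₀ t ⊆ U := by
  obtain ⟨t, htb, ht, hKt⟩ := hK.elim_finite_subcover_image (b := {v ∈ b | v ⊆ U}) (c := id)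
    (fun v hv => hb.isOpen hv.1) fun x hx => by
      obtain ⟨v, hvb, hxv, hvU⟩ := hb.exists_subset_of_mem_open (hKU hx) hU
      exact mem_biUnion ⟨hvb, hvU⟩ hxv
  refine ⟨t, fun v hv => (htb hv).1, ht, by simpa [sUnion_eq_biUnion] using hKt,
    sUnion_subset fun v hv => (htb hv).2⟩

theorem IsProperMap.secondCountableTopology {X Y : Type*} [TopologicalSpace X]
    [TopologicalSpace Y] [SecondCountableTopology X] {f : X → Y} (hf : IsProperMap f)
    (hsurj : Function.Surjective f) : SecondCountableTopology Y := by
  obtain ⟨b, hbc, -, hb⟩ := exists_countable_basis X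
  refine (isTopologicalBasis_of_isOpen_of_nhds (s := (fun t => (f '' (⋃₀ t)ᶜ)ᶜ) ''
    {t | t.Finite ∧ t ⊆ b}) ?_ ?_).secondCountableTopology
    ((countable_ofPred_finite_subset hbc).image _)
  · rintro _ ⟨t, ⟨ht, htb⟩, rfl⟩
    exact (hf.isClosedMap _
      (isOpen_sUnion fun v hv => hb.isOpen (htb hv)).isClosed_compl).isOpen_compl
  · intro y O hy hO
    obtain ⟨t, htb, ht, hyt, htO⟩ := hb.exists_finite_of_isCompact_subset_isOpen
      (hf.isCompact_preimage isCompact_singleton) (hO.preimage hf.continuous)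
      (preimage_mono (singleton_subset_iff.2 hy))
    refine ⟨_, ⟨t, ⟨ht, htb⟩, rfl⟩, ?_, ?_⟩
    · rintro ⟨x, hx, rfl⟩
      exact hx (hyt rfl)
    · intro z hz
      by_contra hzO
      obtain ⟨x, rfl⟩ := hsurj z
      exact hz ⟨x, fun hx => hzO (htO hx), rfl⟩

theorem union_of_compact_secondCountable
    {Y : Type*} [TopologicalSpace Y] [T2Space Y]
    (B C : Set Y) (hB : IsCompact B) (hC : IsCompact C)
    [SecondCountableTopology B] [SecondCountableTopology C] :
    SecondCountableTopology ↥(B ∪ C) := by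
  have : CompactSpace B := isCompact_iff_compactSpace.mp hB
  have : CompactSpace C := isCompact_iff_compactSpace.mp hC
  let f : B ⊕ C → ↥(B ∪ C) :=
    Sum.elim (inclusion subset_union_left) (inclusion subset_union_right)
  have hf : Continuous f := (continuous_inclusion _).sumElim (continuous_inclusion _)
  refine hf.isProperMap.secondCountableTopology ?_
  rintro ⟨y, hyB | hyC⟩
  · exact ⟨.inl ⟨y, hyB⟩, rfl⟩
  · exact ⟨.inr ⟨y, hyC⟩, rfl⟩
end

section
/- Let Z be a compact subset of a metric space and f : Z → [0, ∞) lower semicontinuous, and let U' be a metric space containing Z (sharing the metric). For x ∈ U' let M_x := {z ∈ Z : d(x, z) = d(x, Z)} denote the (nonempty compact) set of closest points of Z to x. Then the set U_f := {x ∈ U' : d(x, Z) < inf_{z ∈ M_x} f(z)} is open in U', and U_f ∩ Z = {z ∈ Z : f(z) > 0}. -/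
open Metric Filter Topology

/-- Lower semicontinuity along a sequence: if `z n → zlim` within `K` and
`f (z n) ≤ b n` with `b n → c`, then `f zlim ≤ c`. -/
lemma lsc_le_of_tendsto_aux {U : Type*} [MetricSpace U] {K : Set U} {f : U → ℝ}
    (hf : LowerSemicontinuousOn f K) {z : ℕ → U} (hz : ∀ n, z n ∈ K)
    {zlim : U} (hzlim : zlim ∈ K) (ht : Filter.Tendsto z atTop (nhds zlim))
    {b : ℕ → ℝ} (hb : ∀ n, f (z n) ≤ b n) {c : ℝ}
    (hbc : Filter.Tendsto b atTop (nhds c)) : f zlim ≤ c := by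
  by_contra h
  push_neg at h
  obtain ⟨y, hcy, hyf⟩ := exists_between h
  have hev : ∀ᶠ w in nhdsWithin zlim K, y < f w := hf zlim hzlim y hyf
  have htw : Filter.Tendsto z atTop (nhdsWithin zlim K) :=
    tendsto_nhdsWithin_of_tendsto_nhds_of_eventually_within z ht
      (Filter.Eventually.of_forall hz)
  have hev2 : ∀ᶠ n in atTop, y < f (z n) := htw.eventually hev
  have hev3 : ∀ᶠ n in atTop, y ≤ b n := hev2.mono fun n hn => (le_of_lt hn).trans (hb n)
  have := ge_of_tendsto hbc hev3
  linarith

/-- A lower semicontinuous function on a nonempty compact set attains its infimum,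
provided it is bounded below. -/
lemma lsc_exists_min_aux {U : Type*} [MetricSpace U] {K : Set U} (hK : IsCompact K)
    (hne : K.Nonempty) {f : U → ℝ} (hf : LowerSemicontinuousOn f K)
    (hbd : BddBelow (f '' K)) : ∃ z ∈ K, f z = sInf (f '' K) := by
  set c := sInf (f '' K) with hc
  have hchoice : ∀ n : ℕ, ∃ z ∈ K, f z < c + 1 / (n + 1) := by
    intro n
    have hlt : c < c + 1 / (n + 1) := by
      have : (0 : ℝ) < 1 / (n + 1) := by positivity
      linarith
    obtain ⟨w, hw, hwlt⟩ := exists_lt_of_csInf_lt (hne.image f) hlt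
    obtain ⟨z, hzK, rfl⟩ := hw
    exact ⟨z, hzK, hwlt⟩
  choose z hzK hzlt using hchoice
  obtain ⟨zlim, hzlimK, φ, hφ, hφt⟩ := hK.tendsto_subseq hzK
  have hb : Filter.Tendsto (fun n => c + 1 / (φ n + 1 : ℝ)) atTop (nhds c) := by
    have h1 : Filter.Tendsto (fun n : ℕ => c + 1 / (n + 1 : ℝ)) atTop (nhds (c + 0)) :=
      tendsto_const_nhds.add tendsto_one_div_add_atTop_nhds_zero_nat
    rw [add_zero] at h1
    exact h1.comp hφ.tendsto_atTop
  have hle : f zlim ≤ c :=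
    lsc_le_of_tendsto_aux hf (fun n => hzK (φ n)) hzlimK hφt
      (fun n => (hzlt (φ n)).le) hb
  exact ⟨zlim, hzlimK, le_antisymm hle (csInf_le hbd ⟨zlim, hzlimK, rfl⟩)⟩

theorem open_set_from_lsc_function
    {U : Type*} [MetricSpace U]
    (Z : Set U) (hZc : IsCompact Z) (hZne : Z.Nonempty)
    (f : U → ℝ) (hf0 : ∀ z ∈ Z, 0 ≤ f z) (hf : LowerSemicontinuousOn f Z)
    (M : U → Set U) (hM : ∀ x, M x = {z ∈ Z | dist x z = Metric.infDist x Z})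
    (Uf : Set U) (hUf : Uf = {x | Metric.infDist x Z < sInf (f '' M x)}) :
    IsOpen Uf ∧ Uf ∩ Z = {z ∈ Z | 0 < f z} := by
  -- Basic facts about the nearest-point sets
  have hMsub : ∀ x, M x ⊆ Z := by intro x; rw [hM]; exact Set.sep_subset _ _
  have hMclosed : ∀ x, IsClosed (M x) := by
    intro x
    rw [hM]
    exact hZc.isClosed.inter (isClosed_eq (continuous_const.dist continuous_id) continuous_const)
  have hMcompact : ∀ x, IsCompact (M x) := fun x => hZc.of_isClosed_subset (hMclosed x) (hMsub x)
  have hMne : ∀ x, (M x).Nonempty := by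
    intro x
    obtain ⟨z, hzZ, hz⟩ := hZc.exists_infDist_eq_dist hZne x
    exact ⟨z, by rw [hM]; exact ⟨hzZ, hz.symm⟩⟩
  have hbd : ∀ x, BddBelow (f '' M x) := by
    intro x
    exact ⟨0, fun w ⟨z, hz, hw⟩ => hw ▸ hf0 z (hMsub x hz)⟩
  have hmin : ∀ x, ∃ z ∈ M x, f z = sInf (f '' M x) := fun x =>
    lsc_exists_min_aux (hMcompact x) (hMne x) (hf.mono (hMsub x)) (hbd x)
  constructor
  · -- Openness: the complement is sequentially closed
    rw [← isClosed_compl_iff]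
    apply IsSeqClosed.isClosed
    intro u p hu hup
    simp only [hUf, Set.mem_compl_iff, Set.mem_setOf_eq, not_lt] at hu ⊢
    -- pick minimizers
    choose z hzM hzf using fun n => hmin (u n)
    have hzZ : ∀ n, z n ∈ Z := fun n => hMsub _ (hzM n)
    obtain ⟨zlim, hzlimZ, φ, hφ, hφt⟩ := hZc.tendsto_subseq hzZ
    have huφ : Filter.Tendsto (fun n => u (φ n)) atTop (nhds p) := hup.comp hφ.tendsto_atTop
    have hdtend : Filter.Tendsto (fun n => Metric.infDist (u (φ n)) Z) atTop
        (nhds (Metric.infDist p Z)) :=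
      ((continuous_infDist_pt Z).tendsto p).comp huφ
    -- zlim is a nearest point of p
    have hdist : ∀ n, dist (u (φ n)) (z (φ n)) = Metric.infDist (u (φ n)) Z := by
      intro n
      have := hzM (φ n)
      rw [hM] at this
      exact this.2
    have hzlimM : zlim ∈ M p := by
      rw [hM]
      refine ⟨hzlimZ, ?_⟩
      have h1 : Filter.Tendsto (fun n => dist (u (φ n)) (z (φ n))) atTop
          (nhds (dist p zlim)) := huφ.dist hφt
      have h2 : Filter.Tendsto (fun n => dist (u (φ n)) (z (φ n))) atTop
          (nhds (Metric.infDist p Z)) := by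
        simpa only [hdist] using hdtend
      exact tendsto_nhds_unique h1 h2
    -- lower semicontinuity bound
    have hle : f zlim ≤ Metric.infDist p Z := by
      refine lsc_le_of_tendsto_aux hf (fun n => hzZ (φ n)) hzlimZ hφt ?_ hdtend
      intro n
      calc f (z (φ n)) = sInf (f '' M (u (φ n))) := hzf (φ n)
        _ ≤ Metric.infDist (u (φ n)) Z := hu (φ n)
    exact (csInf_le (hbd p) ⟨zlim, hzlimM, rfl⟩).trans hle
  · -- Intersection with Z
    ext w
    simp only [hUf, Set.mem_inter_iff, Set.mem_setOf_eq]
    constructor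
    · rintro ⟨hlt, hwZ⟩
      refine ⟨hwZ, ?_⟩
      have hMw : M w = {w} := by
        rw [hM]
        ext v
        simp only [Set.mem_setOf_eq, Set.mem_singleton_iff]
        constructor
        · rintro ⟨hvZ, hv⟩
          rw [Metric.infDist_zero_of_mem hwZ] at hv
          exact (dist_eq_zero.mp hv).symm
        · rintro rfl
          exact ⟨hwZ, by rw [Metric.infDist_zero_of_mem hwZ, dist_self]⟩
      rw [Metric.infDist_zero_of_mem hwZ, hMw, Set.image_singleton, csInf_singleton] at hlt
      exact hlt
    · rintro ⟨hwZ, hpos⟩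
      refine ⟨?_, hwZ⟩
      have hMw : M w = {w} := by
        rw [hM]
        ext v
        simp only [Set.mem_setOf_eq, Set.mem_singleton_iff]
        constructor
        · rintro ⟨hvZ, hv⟩
          rw [Metric.infDist_zero_of_mem hwZ] at hv
          exact (dist_eq_zero.mp hv).symm
        · rintro rfl
          exact ⟨hwZ, by rw [Metric.infDist_zero_of_mem hwZ, dist_self]⟩
      rw [Metric.infDist_zero_of_mem hwZ, hMw, Set.image_singleton, csInf_singleton]
      exact hpos
end

section
/- Let U be a metric space, U' ⊆ U a precompact open subset, Z ⊆ U' relatively closed in U', and for i = 1, …, N let Z_i ⊆ Z be relatively open subsets and W_K ⊆ U' open subsets indexed by K ⊆ {1,…,N} such that W_K ∩ Z = Z_K := ⋂_{i ∈ K} Z_i. Then there exist open subsets U_K ⊆ W_K with U_K ∩ Z = Z_K and U_J ∩ U_K = U_{J ∪ K} for all J, K ⊆ {1,…,N}. -/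
/-!
We look for `V K` of the form `G ∩ ⋂ i ∈ K, O i` with `G` an open neighbourhood of `Z` and
`O i` open with `O i ∩ Z = Zi i`: such sets have the right traces on `Z` and satisfy
`V J ∩ V K = V (J ∪ K)` automatically. It remains to arrange `G ∩ ⋂ i ∈ K, O i ⊆ W K` for every
`K`. One such inclusion is obtained by shrinking `G` and the `O i` without changing their traces
on `Z`, peeling off one index of `K` at a time: two open sets `A`, `B` with `A ∩ B ∩ Z ⊆ P` can
be shrunk rel `Z` so that `A ∩ B ⊆ P`, because `(A ∩ Z) \ P` and `(B ∩ Z) \ P` are separated sets,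
hence have disjoint neighbourhoods in a completely normal space. Shrinking preserves the
inclusions already obtained, so the finitely many `K` can be treated one after the other.
-/

open Set

section CompletelyNormal

variable {X : Type*} [TopologicalSpace X]

theorem exists_shrink_inter_subset_of_inter_inter_subset [CompletelyNormalSpace X]
    {Z A B P : Set X} (hA : IsOpen A) (hB : IsOpen B) (hP : IsOpen P) (hABP : A ∩ B ∩ Z ⊆ P) :
    ∃ A' B', IsOpen A' ∧ IsOpen B' ∧ A' ⊆ A ∧ B' ⊆ B ∧
      A' ∩ Z = A ∩ Z ∧ B' ∩ Z = B ∩ Z ∧ A' ∩ B' ⊆ P := by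
  have hAB : Disjoint A ((B ∩ Z) \ P) := disjoint_left.2 fun x hxA ⟨⟨hxB, hxZ⟩, hxP⟩ =>
    hxP (hABP ⟨⟨hxA, hxB⟩, hxZ⟩)
  have hBA : Disjoint B ((A ∩ Z) \ P) := disjoint_left.2 fun x hxB ⟨⟨hxA, hxZ⟩, hxP⟩ =>
    hxP (hABP ⟨⟨hxA, hxB⟩, hxZ⟩)
  obtain ⟨EA, EB, hEA, hEB, hAEA, hBEB, hE⟩ : SeparatedNhds ((A ∩ Z) \ P) ((B ∩ Z) \ P) :=
    separatedNhds_iff_disjoint.2 <| completely_normal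
      ((hBA.closure_right hB).mono_left (sdiff_subset.trans inter_subset_left)).symm
      ((hAB.closure_right hA).mono_left (sdiff_subset.trans inter_subset_left))
  have trace_eq {C E : Set X} (hCE : (C ∩ Z) \ P ⊆ E) : C ∩ (P ∪ E) ∩ Z = C ∩ Z :=
    (inter_subset_inter_left _ inter_subset_left).antisymm fun x hx =>
      ⟨⟨hx.1, (em (x ∈ P)).imp id fun hxP => hCE ⟨hx, hxP⟩⟩, hx.2⟩
  refine ⟨A ∩ (P ∪ EA), B ∩ (P ∪ EB), hA.inter (hP.union hEA), hB.inter (hP.union hEB),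
    inter_subset_left, inter_subset_left, trace_eq hAEA, trace_eq hBEB, ?_⟩
  rintro x ⟨⟨-, hxP | hxA⟩, -, hxP | hxB⟩
  iterate 3 exact hxP
  exact (hE.ne_of_mem hxA hxB rfl).elim

variable {ι : Type*} {Z : Set X} {T : ι → Set X}

structure IsOpenTraceFamily (Z : Set X) (T : ι → Set X) (G : Set X) (O : ι → Set X) : Prop where
  isOpen_nhd : IsOpen G
  subset_nhd : Z ⊆ G
  isOpen : ∀ i, IsOpen (O i)
  inter_eq : ∀ i, O i ∩ Z = T i

namespace IsOpenTraceFamily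

variable {G : Set X} {O : ι → Set X}

theorem isOpen_biInter (h : IsOpenTraceFamily Z T G O) (K : Finset ι) :
    IsOpen (G ∩ ⋂ i ∈ K, O i) :=
  h.isOpen_nhd.inter (isOpen_biInter_finset fun i _ => h.isOpen i)

theorem biInter_inter_eq (h : IsOpenTraceFamily Z T G O) (K : Finset ι) :
    (G ∩ ⋂ i ∈ K, O i) ∩ Z = Z ∩ ⋂ i ∈ K, T i := by
  ext x
  simp only [← h.inter_eq, mem_inter_iff, mem_iInter]
  exact ⟨fun ⟨⟨_, hO⟩, hZ⟩ => ⟨hZ, fun i hi => ⟨hO i hi, hZ⟩⟩,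
    fun ⟨hZ, hO⟩ => ⟨⟨h.subset_nhd hZ, fun i hi => (hO i hi).1⟩, hZ⟩⟩

theorem update [DecidableEq ι] (h : IsOpenTraceFamily Z T G O) {j : ι} {B : Set X}
    (hB : IsOpen B) (hBZ : B ∩ Z = O j ∩ Z) : IsOpenTraceFamily Z T G (Function.update O j B) where
  isOpen_nhd := h.isOpen_nhd
  subset_nhd := h.subset_nhd
  isOpen i := by
    rcases eq_or_ne i j with rfl | hij
    · simpa using hB
    · simpa [hij] using h.isOpen i
  inter_eq i := by
    rcases eq_or_ne i j with rfl | hij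
    · simpa [hBZ] using h.inter_eq i
    · simpa [hij] using h.inter_eq i

theorem exists_shrink_biInter_subset [CompletelyNormalSpace X] [DecidableEq ι]
    (h : IsOpenTraceFamily Z T G O) (K : Finset ι) {W : Set X} (hW : IsOpen W)
    (hKW : Z ∩ ⋂ i ∈ K, T i ⊆ W) :
    ∃ G' O', IsOpenTraceFamily Z T G' O' ∧ G' ⊆ G ∧ (∀ i, O' i ⊆ O i) ∧
      G' ∩ ⋂ i ∈ K, O' i ⊆ W := by
  induction K using Finset.induction_on generalizing G O W with
  | empty =>
    have hZW : Z ⊆ W := by simpa using hKW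
    exact ⟨G ∩ W, O, ⟨h.isOpen_nhd.inter hW, subset_inter h.subset_nhd hZW, h.isOpen, h.inter_eq⟩,
      inter_subset_left, fun _ => subset_rfl, by simp⟩
  | insert j K _ ih =>
    have hKjW : (G ∩ ⋂ i ∈ K, O i) ∩ O j ∩ Z ⊆ W := by
      rw [inter_inter_distrib_right, h.biInter_inter_eq, h.inter_eq]
      rw [Finset.set_biInter_insert] at hKW
      exact fun x ⟨⟨hZ, hK⟩, hj⟩ => hKW ⟨hZ, hj, hK⟩
    obtain ⟨A, B, hA, hB, -, hBO, hAZ, hBZ, hAB⟩ :=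
      exists_shrink_inter_subset_of_inter_inter_subset (h.isOpen_biInter K) (h.isOpen j) hW hKjW
    obtain ⟨G', O', h', hG', hO', hG'A⟩ :=
      ih (h.update hB hBZ) hA (by rw [← h.biInter_inter_eq, ← hAZ]; exact inter_subset_left)
    refine ⟨G', O', h', hG', fun i => (hO' i).trans ?_, ?_⟩
    · rcases eq_or_ne i j with rfl | hij
      · simpa using hBO
      · simp [hij]
    · rw [Finset.set_biInter_insert, inter_left_comm]
      refine (inter_subset_inter ((hO' j).trans (Function.update_self j B O).subset) hG'A).trans ?_
      exact (inter_comm B A).trans_subset hAB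

end IsOpenTraceFamily

theorem exists_isOpenTraceFamily_biInter_subset [CompletelyNormalSpace X] [DecidableEq ι]
    (hT : ∀ i, ∃ O, IsOpen O ∧ T i = O ∩ Z) {W : Finset ι → Set X} (hW : ∀ K, IsOpen (W K))
    (hTW : ∀ K, Z ∩ ⋂ i ∈ K, T i ⊆ W K) (𝒦 : Finset (Finset ι)) :
    ∃ G O, IsOpenTraceFamily Z T G O ∧ ∀ K ∈ 𝒦, G ∩ ⋂ i ∈ K, O i ⊆ W K := by
  induction 𝒦 using Finset.induction_on with
  | empty =>
    choose O hO hTO using hT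
    exact ⟨univ, O, ⟨isOpen_univ, subset_univ Z, hO, fun i => (hTO i).symm⟩, by simp⟩
  | insert K 𝒦 _ ih =>
    obtain ⟨G, O, h, h𝒦⟩ := ih
    obtain ⟨G', O', h', hG', hO', hK⟩ := h.exists_shrink_biInter_subset K (hW K) (hTW K)
    refine ⟨G', O', h', (Finset.forall_mem_insert _ _ _).2 ⟨hK, fun L hL => ?_⟩⟩
    exact (inter_subset_inter hG' (iInter₂_mono fun i _ => hO' i)).trans (h𝒦 L hL)

end CompletelyNormal

theorem exists_open_sets_with_intersection_property_general
    {U : Type*} [MetricSpace U] {N : ℕ}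
    (Z : Set U)
    (Zi : Fin N → Set U) (hZi : ∀ i, ∃ O : Set U, IsOpen O ∧ Zi i = O ∩ Z)
    (W : Finset (Fin N) → Set U) (hWopen : ∀ K, IsOpen (W K))
    (hWZ : ∀ K, W K ∩ Z = Z ∩ ⋂ i ∈ K, Zi i) :
    ∃ V : Finset (Fin N) → Set U,
      (∀ K, IsOpen (V K)) ∧ (∀ K, V K ⊆ W K) ∧
      (∀ K, V K ∩ Z = Z ∩ ⋂ i ∈ K, Zi i) ∧
      (∀ J K, V J ∩ V K = V (J ∪ K)) := by
  obtain ⟨G, O, h, hW⟩ := exists_isOpenTraceFamily_biInter_subset hZi hWopen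
    (fun K => (hWZ K).ge.trans inter_subset_left) Finset.univ
  refine ⟨fun K => G ∩ ⋂ i ∈ K, O i, h.isOpen_biInter, fun K => hW K (Finset.mem_univ K),
    h.biInter_inter_eq, fun J K => ?_⟩
  dsimp only
  rw [Finset.set_biInter_inter, inter_inter_inter_comm, inter_self]

theorem exists_open_sets_with_intersection_property
    {U : Type*} [MetricSpace U] {N : ℕ}
    (U' : Set U) (hU'open : IsOpen U') (hU'pc : IsCompact (closure U'))
    (Z : Set U) (hZsub : Z ⊆ U') (hZclosed : Z = closure Z ∩ U')
    (Zi : Fin N → Set U) (hZi : ∀ i, ∃ O : Set U, IsOpen O ∧ Zi i = O ∩ Z)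
    (W : Finset (Fin N) → Set U) (hWopen : ∀ K, IsOpen (W K))
    (hWsub : ∀ K, W K ⊆ U')
    (hWZ : ∀ K, W K ∩ Z = Z ∩ ⋂ i ∈ K, Zi i) :
    ∃ V : Finset (Fin N) → Set U,
      (∀ K, IsOpen (V K)) ∧ (∀ K, V K ⊆ W K) ∧
      (∀ K, V K ∩ Z = Z ∩ ⋂ i ∈ K, Zi i) ∧
      (∀ J K, V J ∩ V K = V (J ∪ K)) :=
  exists_open_sets_with_intersection_property_general Z Zi hZi W hWopen hWZ
end

section
/- Let (|K|, d) be a metric space, β : [0,1] → [0,1] a nondecreasing function with β(t) − β(s) ≤ 2(t − s) for all s ≤ t, and d' a second metric on |K| bounded by 1. Define d_r(x, x') := d(x, x') + β(r)·d'(x, x'). Then D((t, x), (t', x')) := d_{min(t,t')}(x, x') + |t − t'| defines a metric on [0,1] × |K|. -/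
theorem interpolated_metric_on_product
    {K : Type*} (d d' : K → K → ℝ)
    (hd_self : ∀ x, d x x = 0) (hd_eq : ∀ x y, d x y = 0 → x = y)
    (hd_symm : ∀ x y, d x y = d y x)
    (hd_tri : ∀ x y z, d x z ≤ d x y + d y z)
    (hd'_self : ∀ x, d' x x = 0) (hd'_symm : ∀ x y, d' x y = d' y x)
    (hd'_tri : ∀ x y z, d' x z ≤ d' x y + d' y z)
    (hd'_le : ∀ x y, d' x y ≤ 1)
    (β : ℝ → ℝ)
    (hβ_mem : ∀ t ∈ Set.Icc (0:ℝ) 1, β t ∈ Set.Icc (0:ℝ) 1)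
    (hβ_mono : ∀ s t, s ∈ Set.Icc (0:ℝ) 1 → t ∈ Set.Icc (0:ℝ) 1 → s ≤ t → β s ≤ β t)
    (hβ_lip : ∀ s t, s ∈ Set.Icc (0:ℝ) 1 → t ∈ Set.Icc (0:ℝ) 1 → s ≤ t →
      β t - β s ≤ 2 * (t - s))
    (D : (↥(Set.Icc (0:ℝ) 1) × K) → (↥(Set.Icc (0:ℝ) 1) × K) → ℝ)
    (hD : ∀ p q, D p q =
      d p.2 q.2 + β (↑(min p.1 q.1)) * d' p.2 q.2 + |(p.1 : ℝ) - (q.1 : ℝ)|) :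
    (∀ p q, D p q = D q p) ∧ (∀ p q, D p q = 0 ↔ p = q) ∧
    (∀ p q r, D p r ≤ D p q + D q r) := by

  have hd_nonneg : ∀ x y, 0 ≤ d x y := fun x y => by
    nlinarith [hd_tri x y x, hd_self x, hd_symm x y]
  have hd'_nonneg : ∀ x y, 0 ≤ d' x y := fun x y => by
    nlinarith [hd'_tri x y x, hd'_self x, hd'_symm x y]
  have hmem : ∀ a : ↥(Set.Icc (0:ℝ) 1), (a:ℝ) ∈ Set.Icc (0:ℝ) 1 := fun a => a.2
  have hmin_mem : ∀ a b : ℝ, a ∈ Set.Icc (0:ℝ) 1 → b ∈ Set.Icc (0:ℝ) 1 →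
      min a b ∈ Set.Icc (0:ℝ) 1 := fun a b ha hb =>
    ⟨le_min ha.1 hb.1, min_le_of_left_le ha.2⟩
  have hβ_nonneg : ∀ t : ℝ, t ∈ Set.Icc (0:ℝ) 1 → 0 ≤ β t := fun t ht => (hβ_mem t ht).1
  have hcoe_min : ∀ a b : ↥(Set.Icc (0:ℝ) 1), ((min a b : ↥(Set.Icc (0:ℝ) 1)) : ℝ)
      = min (a:ℝ) (b:ℝ) := by
    intro a b
    rcases le_total a b with h | h
    · rw [min_eq_left h, min_eq_left (Subtype.coe_le_coe.mpr h)]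
    · rw [min_eq_right h, min_eq_right (Subtype.coe_le_coe.mpr h)]
  refine ⟨?_, ?_, ?_⟩
  · intro p q
    rw [hD, hD, min_comm, hd_symm, hd'_symm, abs_sub_comm]
  · intro p q
    constructor
    · intro h
      rw [hD] at h
      have hm := hmin_mem _ _ (hmem p.1) (hmem q.1)
      rw [hcoe_min] at h
      have h1 : 0 ≤ β (min (p.1:ℝ) (q.1:ℝ)) * d' p.2 q.2 :=
        mul_nonneg (hβ_nonneg _ hm) (hd'_nonneg _ _)
      have h2 : 0 ≤ |(p.1:ℝ) - (q.1:ℝ)| := abs_nonneg _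
      have h3 : 0 ≤ d p.2 q.2 := hd_nonneg _ _
      have hd0 : d p.2 q.2 = 0 := by linarith
      have habs : |(p.1:ℝ) - (q.1:ℝ)| = 0 := by linarith
      have ht : p.1 = q.1 := Subtype.ext (by
        have := abs_eq_zero.mp habs; linarith)
      exact Prod.ext ht (hd_eq _ _ hd0)
    · rintro rfl
      rw [hD]
      simp [hd_self, hd'_self]
  · intro p q r
    rw [hD p r, hD p q, hD q r, hcoe_min, hcoe_min, hcoe_min]
    set t := (p.1:ℝ) with ht
    set t' := (q.1:ℝ) with ht'
    set t'' := (r.1:ℝ) with ht''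
    have hmp := hmem p.1
    have hmq := hmem q.1
    have hmr := hmem r.1
    have habs : |t - t''| ≤ |t - t'| + |t' - t''| := abs_sub_le t t' t''
    rcases lt_or_ge t' (min t t'') with h | h
    · -- hard case: t' < min t t''
      have h1 : t' < t := lt_of_lt_of_le h (min_le_left _ _)
      have h2 : t' < t'' := lt_of_lt_of_le h (min_le_right _ _)
      rw [min_eq_right h1.le, min_eq_left h2.le]
      have hlip := hβ_lip t' (min t t'') hmq (hmin_mem _ _ hmp hmr) h.le
      have hb0 : 0 ≤ β t' := hβ_nonneg _ hmq
      have habs1 : |t - t'| = t - t' := abs_of_nonneg (by linarith)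
      have habs2 : |t' - t''| = t'' - t' := by rw [abs_of_nonpos (by linarith : t' - t'' ≤ 0)]; ring
      have hdle := hd'_le p.2 r.2
      have hdtri := hd_tri p.2 q.2 r.2
      have hdtri' := hd'_tri p.2 q.2 r.2
      have hd'n := hd'_nonneg p.2 r.2
      rcases le_total t t'' with htt | htt
      · rw [min_eq_left htt] at *
        rw [abs_of_nonpos (by linarith : t - t'' ≤ 0)]
        nlinarith
      · rw [min_eq_right htt] at *
        rw [abs_of_nonneg (by linarith : 0 ≤ t - t'')]
        nlinarith
    · -- easy case: min t t'' ≤ t'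
      have hc1 : min t t'' ≤ min t t' := le_min (min_le_left _ _) h
      have hc2 : min t t'' ≤ min t' t'' := le_min h (min_le_right _ _)
      have hmem1 := hmin_mem _ _ hmp hmr
      have hβ1 := hβ_mono _ _ hmem1 (hmin_mem _ _ hmp hmq) hc1
      have hβ2 := hβ_mono _ _ hmem1 (hmin_mem _ _ hmq hmr) hc2
      have hb0 : 0 ≤ β (min t t'') := hβ_nonneg _ hmem1
      have hdtri := hd_tri p.2 q.2 r.2
      have hdtri' := hd'_tri p.2 q.2 r.2
      have h1 := hd'_nonneg p.2 q.2
      have h2 := hd'_nonneg q.2 r.2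
      nlinarith
end

section
/- Let X be a topological space with finite open cover X = ⋃_{i=1}^N F_i, and suppose chosen nested families F_i^0 ⊑ G_i^1 ⊑ F_i^1 ⊑ … ⊑ F_i^N = F_i of open sets such that X = ⋃_i F_i^n and X = ⋃_i G_i^n for each n (here A ⊑ B means closure(A) ⊆ B with closure(A) compact). Define Z_I := (⋂_{i∈I} G_i^{|I|}) \ ⋃_{j∉I} closure(F_j^{|I|}). Then for every x ∈ X, setting I_x := ⋃ {I ⊆ {1,…,N} : x ∈ ⋂_{i∈I} G_i^{|I|}}, one has x ∈ Z_{I_x}; in particular X = ⋃_{I} Z_I. -/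
theorem cover_reduction_covering_property
    {X : Type*} [TopologicalSpace X] {N : ℕ}
    (F : Fin N → Set X) (hFcov : ⋃ i, F i = Set.univ)
    (Fk Gk : Fin N → ℕ → Set X)
    (hFopen : ∀ i n, IsOpen (Fk i n)) (hGopen : ∀ i n, IsOpen (Gk i n))
    (hFG : ∀ i n, n < N → closure (Fk i n) ⊆ Gk i (n+1) ∧ IsCompact (closure (Fk i n)))
    (hGF : ∀ i n, 1 ≤ n → n ≤ N → closure (Gk i n) ⊆ Fk i n ∧ IsCompact (closure (Gk i n)))
    (hFN : ∀ i, Fk i N = F i)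
    (hFcovs : ∀ n ≤ N, ⋃ i, Fk i n = Set.univ)
    (hGcovs : ∀ n, 1 ≤ n → n ≤ N → ⋃ i, Gk i n = Set.univ)
    (Z : Finset (Fin N) → Set X)
    (hZ : ∀ I, Z I = (⋂ i ∈ I, Gk i I.card) \ ⋃ j ∈ Iᶜ, closure (Fk j I.card)) :
    (∀ x : X,
      x ∈ Z (@Finset.filter (Fin N)
        (fun i => ∃ I : Finset (Fin N), i ∈ I ∧ x ∈ ⋂ j ∈ I, Gk j I.card)
        (Classical.decPred _) Finset.univ)) ∧
    ⋃ I, Z I = Set.univ := by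
  -- monotonicity of the G chain
  have mono : ∀ (i : Fin N) (m n : ℕ), 1 ≤ n → m ≤ N → n ≤ m → Gk i n ⊆ Gk i m := by
    intro i m
    induction m with
    | zero => intro n h1 _ h2; omega
    | succ m ih =>
      intro n h1 hmN hnm
      rcases eq_or_lt_of_le hnm with h | h
      · rw [h]
      · have h1m : 1 ≤ m := by omega
        have hGm := (hGF i m h1m (by omega)).1
        have hFm := (hFG i m (by omega)).1
        exact (ih n h1 (by omega) (by omega)).trans
          (((subset_closure.trans hGm).trans subset_closure).trans hFm)
  have main : ∀ x : X,
      x ∈ Z (@Finset.filter (Fin N)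
        (fun i => ∃ I : Finset (Fin N), i ∈ I ∧ x ∈ ⋂ j ∈ I, Gk j I.card)
        (Classical.decPred _) Finset.univ) := by
    intro x
    set S : Finset (Fin N) := (@Finset.filter (Fin N)
        (fun i => ∃ I : Finset (Fin N), i ∈ I ∧ x ∈ ⋂ j ∈ I, Gk j I.card)
        (Classical.decPred _) Finset.univ) with hS
    have memS : ∀ i : Fin N,
        i ∈ S ↔ ∃ I : Finset (Fin N), i ∈ I ∧ x ∈ ⋂ j ∈ I, Gk j I.card := by
      intro i
      simp [hS, Finset.mem_filter]
    have subS : ∀ I : Finset (Fin N), (x ∈ ⋂ j ∈ I, Gk j I.card) → I ⊆ S := by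
      intro I hI i hi
      exact (memS i).mpr ⟨I, hi, hI⟩
    have hScard : S.card ≤ N := by
      simpa using Finset.card_le_univ S
    have B : x ∈ ⋂ i ∈ S, Gk i S.card := by
      rw [Set.mem_iInter₂]
      intro i hi
      obtain ⟨I, hiI, hxI⟩ := (memS i).mp hi
      have hIS : I ⊆ S := subS I hxI
      have h1 : 1 ≤ I.card := Finset.card_pos.mpr ⟨i, hiI⟩
      have hx : x ∈ Gk i I.card := by
        rw [Set.mem_iInter₂] at hxI
        exact hxI i hiI
      exact mono i S.card I.card h1 hScard (Finset.card_le_card hIS) hx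
    have C : ∀ j : Fin N, j ∉ S → x ∉ closure (Fk j S.card) := by
      intro j hj hx
      have hSlt : S.card < N := by
        rcases lt_or_eq_of_le hScard with h | h
        · exact h
        · exfalso
          have : S = Finset.univ := by
            apply Finset.eq_univ_of_card
            simpa using h
          exact hj (this ▸ Finset.mem_univ j)
      have hxG : x ∈ Gk j (S.card + 1) := (hFG j S.card hSlt).1 hx
      have hxI : x ∈ ⋂ i ∈ insert j S, Gk i (insert j S).card := by
        rw [Set.mem_iInter₂]
        intro i hi
        rw [Finset.card_insert_of_notMem hj]
        rcases Finset.mem_insert.mp hi with rfl | hi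
        · exact hxG
        · have h1 : 1 ≤ S.card := Finset.card_pos.mpr ⟨i, hi⟩
          have hx' : x ∈ Gk i S.card := by
            rw [Set.mem_iInter₂] at B
            exact B i hi
          exact mono i (S.card + 1) S.card h1 (by omega) (by omega) hx'
      exact hj ((memS j).mpr ⟨insert j S, Finset.mem_insert_self j S, hxI⟩)
    rw [hZ]
    refine ⟨B, ?_⟩
    intro hx
    rw [Set.mem_iUnion₂] at hx
    obtain ⟨j, hj, hxj⟩ := hx
    exact C j (Finset.mem_compl.mp hj) hxj
  refine ⟨main, ?_⟩
  apply Set.eq_univ_of_forall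
  intro x
  exact Set.mem_iUnion.mpr ⟨_, main x⟩
end

section
/- Let (Z_I')_{I} and (Z_I'')_{I} be two cover reductions of a finite open cover (F_i)_{i=1,…,N} of a compact Hausdorff space X with Z_I' ⊆ Z_I'' for all I. Then the sets V_I := ([0, 2/3) × Z_I') ∪ ((1/3, 1] × Z_I'') ⊆ [0,1] × X form a cover reduction of the product cover ([0,1] × F_i) of [0,1] × X, which restricts to (Z_I') over {0} × X and to (Z_I'') over {1} × X. -/
/-- A cover reduction of the open cover `F` of `X`: open sets `Z I` indexed by
subsets `I ⊆ {1,…,N}`, precompactly contained in `F_I = ⋂_{i ∈ I} F i`,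
covering `X`, with closures intersecting only for nested index sets. -/
def IsCoverReduction {X : Type*} [TopologicalSpace X] {N : ℕ}
    (F : Fin N → Set X) (Z : Finset (Fin N) → Set X) : Prop :=
  (∀ I, IsOpen (Z I)) ∧
  (∀ I, IsCompact (closure (Z I)) ∧ closure (Z I) ⊆ ⋂ i ∈ I, F i) ∧
  (∀ I J, (closure (Z I) ∩ closure (Z J)).Nonempty → I ⊆ J ∨ J ⊆ I) ∧
  (⋃ I, Z I) = Set.univ

theorem concordance_of_nested_cover_reductions
    {X : Type*} [TopologicalSpace X] [CompactSpace X] [T2Space X]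
    {N : ℕ} (F : Fin N → Set X) (hFopen : ∀ i, IsOpen (F i))
    (hFcov : ⋃ i, F i = Set.univ)
    (Z' Z'' : Finset (Fin N) → Set X)
    (hZ' : IsCoverReduction F Z') (hZ'' : IsCoverReduction F Z'')
    (hsub : ∀ I, Z' I ⊆ Z'' I)
    (V : Finset (Fin N) → Set (↥(Set.Icc (0:ℝ) 1) × X))
    (hV : ∀ I, V I = {p | ((p.1 : ℝ) < 2/3 ∧ p.2 ∈ Z' I) ∨
      (1/3 < (p.1 : ℝ) ∧ p.2 ∈ Z'' I)}) :
    IsCoverReduction (fun i => {p : ↥(Set.Icc (0:ℝ) 1) × X | p.2 ∈ F i}) V ∧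
    (∀ I (x : X),
      ((⟨⟨0, Set.mem_Icc.mpr ⟨le_refl 0, zero_le_one⟩⟩, x⟩ :
        ↥(Set.Icc (0:ℝ) 1) × X) ∈ V I ↔ x ∈ Z' I)) ∧
    (∀ I (x : X),
      ((⟨⟨1, Set.mem_Icc.mpr ⟨zero_le_one, le_refl 1⟩⟩, x⟩ :
        ↥(Set.Icc (0:ℝ) 1) × X) ∈ V I ↔ x ∈ Z'' I)) := by
  obtain ⟨hZ'open, hZ'cpt, hZ'sep, hZ'cov⟩ := hZ'
  obtain ⟨hZ''open, hZ''cpt, hZ''sep, hZ''cov⟩ := hZ''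
  -- key closure bound
  have key : ∀ I, closure (V I) ⊆ {p : ↥(Set.Icc (0:ℝ) 1) × X | p.2 ∈ closure (Z'' I)} := by
    intro I
    apply closure_minimal
    · rw [hV I]
      rintro p (⟨-, hp⟩ | ⟨-, hp⟩)
      · exact subset_closure (hsub I hp)
      · exact subset_closure hp
    · exact (isClosed_closure).preimage continuous_snd
  have hVopen : ∀ I, IsOpen (V I) := by
    intro I
    rw [hV I]
    have h1 : IsOpen {p : ↥(Set.Icc (0:ℝ) 1) × X | (p.1 : ℝ) < 2/3 ∧ p.2 ∈ Z' I} := by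
      apply IsOpen.inter
      · exact isOpen_lt (Continuous.comp continuous_subtype_val continuous_fst)
          continuous_const
      · exact (hZ'open I).preimage continuous_snd
    have h2 : IsOpen {p : ↥(Set.Icc (0:ℝ) 1) × X | 1/3 < (p.1 : ℝ) ∧ p.2 ∈ Z'' I} := by
      apply IsOpen.inter
      · exact isOpen_lt continuous_const
          (Continuous.comp continuous_subtype_val continuous_fst)
      · exact (hZ''open I).preimage continuous_snd
    exact h1.union h2
  refine ⟨⟨hVopen, ?_, ?_, ?_⟩, ?_, ?_⟩
  · intro I
    constructor
    · exact isClosed_closure.isCompact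
    · intro p hp
      have := key I hp
      have h2 := (hZ''cpt I).2 this
      simp only [Set.mem_iInter] at h2 ⊢
      exact fun i hi => h2 i hi
  · intro I J ⟨p, hpI, hpJ⟩
    exact hZ''sep I J ⟨p.2, key I hpI, key J hpJ⟩
  · ext p
    simp only [Set.mem_iUnion, Set.mem_univ, iff_true]
    by_cases h : (p.1 : ℝ) < 2/3
    · have : p.2 ∈ ⋃ I, Z' I := by rw [hZ'cov]; trivial
      obtain ⟨I, hI⟩ := Set.mem_iUnion.mp this
      exact ⟨I, by rw [hV I]; exact Or.inl ⟨h, hI⟩⟩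
    · have : p.2 ∈ ⋃ I, Z'' I := by rw [hZ''cov]; trivial
      obtain ⟨I, hI⟩ := Set.mem_iUnion.mp this
      refine ⟨I, by rw [hV I]; exact Or.inr ⟨by push_neg at h; linarith, hI⟩⟩
  · intro I x
    rw [hV I]
    simp only [Set.mem_setOf_eq]
    norm_num
  · intro I x
    rw [hV I]
    simp only [Set.mem_setOf_eq]
    norm_num
end
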